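/- arXiv:math/0702855 — 5 statements merged into one kernel-verified Lean document; each statement's English description precedes it below -/
import Mathlib

section
/- The k-subalgebra of R_n generated by the set {e_1, e_2, …, e_n, e_n^{-1}} is equal to Λ_n, the algebra of all symmetric Laurent polynomials. -/
/-!
The `k`-subalgebra of `R_n` generated by `{e_1, …, e_n, e_n⁻¹}` equals `Λ_n`,
the algebra of all symmetric Laurent polynomials.
-/

noncomputable section

variable (k : Type) [Field k] [CharZero k] (n : ℕ)

/-- The Laurent polynomial ring in `n` variables over `k`. -/
abbrev Rn : Type := AddMonoidAlgebra k (Fin n → ℤ)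

/-- The monomial `z^γ = z_1^{γ_1} ⋯ z_n^{γ_n}`. -/
def Z (γ : Fin n → ℤ) : Rn k n := AddMonoidAlgebra.single γ 1

/-- Permutation of the exponents, as an additive equivalence of `ℤ^n`. -/
def permAddEquiv (σ : Equiv.Perm (Fin n)) : (Fin n → ℤ) ≃+ (Fin n → ℤ) where
  toFun γ := γ ∘ σ
  invFun γ := γ ∘ σ.symm
  left_inv γ := by funext i; simp
  right_inv γ := by funext i; simp
  map_add' _ _ := rfl

/-- The action of a permutation `σ ∈ S_n` on `R_n` as a `k`-algebra automorphism,
permuting the variables (`z^γ ↦ z^{γ ∘ σ}`). -/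
def permAlg (σ : Equiv.Perm (Fin n)) : Rn k n ≃ₐ[k] Rn k n :=
  AddMonoidAlgebra.domCongr k k (permAddEquiv n σ)

/-- `Λ_n`, the subalgebra of symmetric Laurent polynomials. -/
def SymLaurent : Subalgebra k (Rn k n) where
  carrier := {f | ∀ σ : Equiv.Perm (Fin n), permAlg k n σ f = f}
  mul_mem' := fun {a b} ha hb σ => by rw [map_mul, ha σ, hb σ]
  add_mem' := fun {a b} ha hb σ => by rw [map_add, ha σ, hb σ]
  one_mem' := fun σ => map_one _
  zero_mem' := fun σ => map_zero _
  algebraMap_mem' := fun r σ => (permAlg k n σ).commutes r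

/-- The `i`-th elementary symmetric polynomial `e_i = Σ_{|s| = i} ∏_{j ∈ s} z_j`. -/
def esym (i : ℕ) : Rn k n :=
  ∑ s ∈ Finset.univ.powersetCard i, Z k n (fun j => if j ∈ s then 1 else 0)

set_option linter.unusedSectionVars false
set_option linter.unusedVariables false

def iota : (Fin n →₀ ℕ) →+ (Fin n → ℤ) where
  toFun d := fun i => (d i : ℤ)
  map_zero' := by ext i; simp
  map_add' d e := by ext i; simp

def phi : MvPolynomial (Fin n) k →ₐ[k] Rn k n := AddMonoidAlgebra.mapDomainAlgHom k k (iota n)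

lemma phi_injective : Function.Injective (phi k n) := by
  intro p q h
  have : AddMonoidAlgebra.mapDomain (iota n) p = AddMonoidAlgebra.mapDomain (iota n) q := h
  refine AddMonoidAlgebra.mapDomain_injective (fun d e hde => ?_) this
  ext i
  have := congrFun hde i
  simpa [iota] using this

lemma phi_monomial (d : Fin n →₀ ℕ) (r : k) :
    phi k n (MvPolynomial.monomial d r) = AddMonoidAlgebra.single (iota n d) r := by
  show AddMonoidAlgebra.mapDomain (iota n) (AddMonoidAlgebra.single d r) = _
  rw [AddMonoidAlgebra.mapDomain_single]

lemma permAlg_single (σ : Equiv.Perm (Fin n)) (γ : Fin n → ℤ) (r : k) :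
    permAlg k n σ (AddMonoidAlgebra.single γ r) = AddMonoidAlgebra.single (γ ∘ σ) r := by
  simp only [permAlg, AddMonoidAlgebra.domCongr_single]
  rfl

lemma permAlg_phi (σ : Equiv.Perm (Fin n)) (p : MvPolynomial (Fin n) k) :
    permAlg k n σ (phi k n p) = phi k n (MvPolynomial.rename σ.symm p) := by
  have : ((permAlg k n σ : Rn k n ≃ₐ[k] Rn k n) : Rn k n →ₐ[k] Rn k n).comp (phi k n)
      = (phi k n).comp (MvPolynomial.rename (σ.symm : Fin n → Fin n)) := by
    apply MvPolynomial.algHom_ext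
    intro i
    simp only [AlgHom.comp_apply, MvPolynomial.rename_X]
    rw [MvPolynomial.X, phi_monomial, MvPolynomial.X, phi_monomial]
    erw [permAlg_single]
    congr 1
    funext j
    simp [iota, Finsupp.single_apply, Equiv.eq_symm_apply, eq_comm]
  exact congrFun (congrArg DFunLike.coe this) p

lemma phi_symm_mem (p : MvPolynomial (Fin n) k) (hp : p.IsSymmetric) :
    phi k n p ∈ SymLaurent k n := by
  intro σ
  rw [permAlg_phi, hp σ.symm]

lemma symm_of_phi_mem (p : MvPolynomial (Fin n) k) (hp : phi k n p ∈ SymLaurent k n) :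
    p.IsSymmetric := by
  intro σ
  apply phi_injective
  have := hp σ.symm
  rw [permAlg_phi] at this
  simpa using this

lemma phi_esymm (i : ℕ) : phi k n (MvPolynomial.esymm (Fin n) k i) = esym k n i := by
  rw [MvPolynomial.esymm_eq_sum_monomial, map_sum, esym]
  refine Finset.sum_congr rfl fun t _ => ?_
  rw [phi_monomial]
  show _ = AddMonoidAlgebra.single _ 1
  congr 1
  funext j
  simp only [iota, AddMonoidHom.coe_mk, ZeroHom.coe_mk]
  rw [Finsupp.finset_sum_apply]
  simp [Finsupp.single_apply]

lemma Z_const_mem (c : ℤ) : Z k n (fun _ => c) ∈ SymLaurent k n := by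
  intro σ
  rw [Z, permAlg_single]
  rfl

lemma nonneg_mem_range (f : Rn k n) (h : ∀ γ ∈ f.coeff.support, ∀ i, 0 ≤ γ i) :
    ∃ p : MvPolynomial (Fin n) k, phi k n p = f := by
  classical
  refine ⟨∑ γ ∈ f.coeff.support, MvPolynomial.monomial
      (Finsupp.equivFunOnFinite.symm fun i => (γ i).toNat) (f.coeff γ), ?_⟩
  rw [map_sum]
  conv_rhs => rw [← AddMonoidAlgebra.sum_single f]
  rw [Finsupp.sum]
  refine Finset.sum_congr rfl fun γ hγ => ?_
  rw [phi_monomial]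
  congr 1
  funext i
  simp [iota, Int.toNat_of_nonneg (h γ hγ i)]


theorem stmt2 (hn : 0 < n) :
    Algebra.adjoin k
        (insert (Z k n (fun _ => -1)) {x | ∃ i : ℕ, 1 ≤ i ∧ i ≤ n ∧ x = esym k n i}) =
      SymLaurent k n := by
  classical
  apply le_antisymm
  · apply Algebra.adjoin_le
    rintro x (rfl | ⟨i, h1, h2, rfl⟩)
    · exact Z_const_mem k n (-1)
    · rw [← phi_esymm]
      exact phi_symm_mem k n _ (MvPolynomial.esymm_isSymmetric _ _ _)
  · intro f hf
    set S := insert (Z k n (fun _ => -1))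
        {x | ∃ i : ℕ, 1 ≤ i ∧ i ≤ n ∧ x = esym k n i} with hS
    set N : ℕ := f.coeff.support.sup fun γ => Finset.univ.sup fun i => (-γ i).toNat with hN
    set g : Rn k n := f * Z k n (fun _ => (N : ℤ)) with hg
    -- g is symmetric
    have hgsym : g ∈ SymLaurent k n := (SymLaurent k n).mul_mem hf (Z_const_mem k n N)
    -- g has nonneg support
    have hsupp : ∀ γ ∈ g.coeff.support, ∀ i, 0 ≤ γ i := by
      intro δ hδ i
      rw [hg, Z, AddMonoidAlgebra.support_coeff_mul_single f 1 (by simp) _] at hδ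
      obtain ⟨γ, hγ, hδe⟩ := Finset.mem_map.mp hδ
      have h1a : (-γ i).toNat ≤ Finset.univ.sup fun j => (-γ j).toNat :=
        Finset.le_sup (f := fun j => (-γ j).toNat) (Finset.mem_univ i)
      have h1b : (Finset.univ.sup fun j => (-γ j).toNat) ≤ N := Finset.le_sup (f := fun γ => Finset.univ.sup fun j => (-γ j).toNat) hγ
      have h1 : (-γ i).toNat ≤ N := le_trans h1a h1b
      have h2 : -γ i ≤ (N : ℤ) := le_trans (Int.self_le_toNat _) (by exact_mod_cast h1)
      have hδi : δ i = γ i + (N : ℤ) := by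
        rw [← hδe, addRightEmbedding_apply]
        rfl
      clear_value N g
      clear hN h1a h1b hg hδ hγ
      omega
    obtain ⟨p, hp⟩ := nonneg_mem_range k n g hsupp
    have hpsym : p.IsSymmetric := symm_of_phi_mem k n p (hp ▸ hgsym)
    obtain ⟨q, hq⟩ := MvPolynomial.esymmAlgHom_surjective (σ := Fin n) (R := k) (n := n)
      (by simp) ⟨p, (MvPolynomial.mem_symmetricSubalgebra p).mpr hpsym⟩
    have hpq : p = MvPolynomial.aeval
        (fun i : Fin n => MvPolynomial.esymm (Fin n) k (i + 1)) q := by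
      have := congrArg Subtype.val hq
      rw [MvPolynomial.esymmAlgHom_apply] at this
      exact this.symm
    have hcomp : (phi k n).comp
        (MvPolynomial.aeval fun i : Fin n => MvPolynomial.esymm (Fin n) k (i + 1))
        = MvPolynomial.aeval fun i : Fin n => esym k n (i + 1) := by
      rw [MvPolynomial.comp_aeval]
      congr 1
      funext i
      rw [phi_esymm]
    have hgmem : g ∈ Algebra.adjoin k S := by
      have hrange : g ∈ Algebra.adjoin k
          (Set.range fun i : Fin n => esym k n (i + 1)) := by
        rw [Algebra.adjoin_range_eq_range_aeval, AlgHom.mem_range]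
        refine ⟨q, ?_⟩
        rw [← DFunLike.congr_fun hcomp q, AlgHom.comp_apply, ← hpq, hp]
      refine Algebra.adjoin_mono ?_ hrange
      rintro x ⟨i, rfl⟩
      exact Set.mem_insert_iff.mpr
        (Or.inr ⟨(i : ℕ) + 1, Nat.le_add_left 1 i, i.isLt, rfl⟩)
    have hfeq : f = g * (Z k n (fun _ => -1)) ^ N := by
      rw [hg, mul_assoc, Z, Z, AddMonoidAlgebra.single_pow,
        AddMonoidAlgebra.single_mul_single]
      have : ((fun _ => (N : ℤ)) + N • fun _ => (-1 : ℤ)) = (0 : Fin n → ℤ) := by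
        funext i
        simp
      rw [this, one_pow, one_mul]
      rw [show AddMonoidAlgebra.single (0 : Fin n → ℤ) (1 : k) = 1 from rfl, mul_one]
    rw [hfeq]
    exact mul_mem hgmem (pow_mem (Algebra.subset_adjoin (Set.mem_insert _ _)) N)

end
end

section
/- For every k ∈ ℤ and every χ ∈ ℤ^n, the power sum acts on symmetrized monomials by p_k · m_χ = Σ_{i=1}^n m_{χ + k ε_i}, where ε_i ∈ ℤ^n is the i-th standard basis vector. -/
/-!
Action of power sums on symmetrized monomials:
`p_k · m_χ = Σ_{i=1}^n m_{χ + k ε_i}` in `R_n = k[z_1^{±1}, …, z_n^{±1}]`.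
-/

noncomputable section

variable (k : Type) [Field k] [CharZero k] (n : ℕ)

/-- The symmetrized monomial `m_γ = (1/n!) Σ_{σ ∈ S_n} ∏_i z_{σ(i)}^{γ_i}`. -/
def msym (γ : Fin n → ℤ) : Rn k n :=
  ((n.factorial : k)⁻¹) • ∑ σ : Equiv.Perm (Fin n), Z k n (γ ∘ σ)

/-- The power sum `p_m = z_1^m + ⋯ + z_n^m`. -/
def psum (m : ℤ) : Rn k n := ∑ i : Fin n, Z k n (Pi.single i m)

lemma Z_mul (a b : Fin n → ℤ) : Z k n a * Z k n b = Z k n (a + b) := by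
  simp [Z, AddMonoidAlgebra.single_mul_single]

lemma comp_add_single (χ : Fin n → ℤ) (m : ℤ) (i : Fin n) (σ : Equiv.Perm (Fin n)) :
    (χ + Pi.single i m) ∘ σ = χ ∘ σ + Pi.single (σ⁻¹ i) m := by
  funext j
  simp only [Function.comp_apply, Pi.add_apply, Pi.single_apply]
  congr 1
  by_cases h : σ j = i
  · rw [if_pos h, if_pos (by rw [← h]; simp)]
  · rw [if_neg h, if_neg (fun hh => h (by rw [hh]; simp))]

theorem stmt5 (hn : 0 < n) (m : ℤ) (χ : Fin n → ℤ) :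
    psum k n m * msym k n χ = ∑ i : Fin n, msym k n (χ + Pi.single i m) := by
  simp only [psum, msym, Finset.smul_sum, Finset.sum_mul, Finset.mul_sum, mul_smul_comm,
    Z_mul, comp_add_single]
  conv_rhs => rw [Finset.sum_comm]
  refine Finset.sum_congr rfl fun σ _ => ?_
  exact Fintype.sum_equiv σ _ _ fun x => by rw [add_comm]; simp

end
end

section
/- Let R = k[X_m : m ∈ ℤ] be the polynomial ring over k in countably many variables indexed by ℤ (MvPolynomial ℤ k). Then for every n ≥ 1, every χ ∈ ℤ^n and every k ∈ ℤ, the following identity holds in R: Σ_{σ ∈ S_n} sgn(σ) Σ_{1 ≤ i < j ≤ n} X_{χ_i + σ(i) + χ_j + σ(j) + k} · ∏_{l ∈ {1,…,n} \ {i,j}} X_{χ_l + σ(l)} = 0. -/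
/-!
In `R = k[X_m : m ∈ ℤ]`, for every `n ≥ 1`, `χ ∈ ℤ^n` and `m ∈ ℤ`:
`Σ_{σ ∈ S_n} sgn(σ) Σ_{i<j} X_{χ_i+σ(i)+χ_j+σ(j)+m} ∏_{l ≠ i,j} X_{χ_l+σ(l)} = 0`.
Permutations are regarded as bijections of `{1, …, n}`, so `σ(i)` for `i : Fin n`
(0-indexed) is `(σ i : ℕ) + 1`.
(This says that the vector `S_χ` of the imaginary Verma quotient `N(0)` is singular.)
-/

open MvPolynomial

theorem stmt8 (k : Type) [Field k] [CharZero k] (n : ℕ) (hn : 1 ≤ n)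
    (χ : Fin n → ℤ) (m : ℤ) :
    ∑ σ : Equiv.Perm (Fin n),
        (Equiv.Perm.sign σ : ℤ) •
          ∑ i : Fin n, ∑ j ∈ Finset.Ioi i,
            (X (χ i + ((σ i : ℕ) : ℤ) + 1 + (χ j + ((σ j : ℕ) : ℤ) + 1) + m) :
                MvPolynomial ℤ k) *
              ∏ l ∈ (Finset.univ.erase i).erase j, X (χ l + ((σ l : ℕ) : ℤ) + 1) = 0 := by
  simp only [Finset.smul_sum]
  rw [Finset.sum_comm]
  refine Finset.sum_eq_zero fun i _ => ?_
  rw [Finset.sum_comm]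
  refine Finset.sum_eq_zero fun j hj => ?_
  have hij : i ≠ j := (Finset.mem_Ioi.mp hj).ne
  set f : Equiv.Perm (Fin n) → MvPolynomial ℤ k := fun σ =>
    (Equiv.Perm.sign σ : ℤ) •
      ((X (χ i + ((σ i : ℕ) : ℤ) + 1 + (χ j + ((σ j : ℕ) : ℤ) + 1) + m) : MvPolynomial ℤ k) *
        ∏ l ∈ (Finset.univ.erase i).erase j, X (χ l + ((σ l : ℕ) : ℤ) + 1)) with hf
  show ∑ σ : Equiv.Perm (Fin n), f σ = 0
  have key : ∀ σ : Equiv.Perm (Fin n), f (σ * Equiv.swap i j) = - f σ := by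
    intro σ
    have h1 : (σ * Equiv.swap i j) i = σ j := by simp
    have h2 : (σ * Equiv.swap i j) j = σ i := by simp
    have hprod : ∏ l ∈ (Finset.univ.erase i).erase j,
        (X (χ l + (((σ * Equiv.swap i j) l : ℕ) : ℤ) + 1) : MvPolynomial ℤ k)
        = ∏ l ∈ (Finset.univ.erase i).erase j, X (χ l + ((σ l : ℕ) : ℤ) + 1) := by
      refine Finset.prod_congr rfl fun l hl => ?_
      have hlj : l ≠ j := (Finset.mem_erase.mp hl).1
      have hli : l ≠ i := (Finset.mem_erase.mp (Finset.mem_erase.mp hl).2).1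
      rw [Equiv.Perm.mul_apply, Equiv.swap_apply_of_ne_of_ne hli hlj]
    have harg : χ i + ((σ j : ℕ) : ℤ) + 1 + (χ j + ((σ i : ℕ) : ℤ) + 1) + m
        = χ i + ((σ i : ℕ) : ℤ) + 1 + (χ j + ((σ j : ℕ) : ℤ) + 1) + m := by ring
    simp only [hf, h1, h2, hprod, harg, Equiv.Perm.sign_mul,
      Equiv.Perm.sign_swap hij]
    push_cast
    rw [mul_neg_one, neg_smul]
  have hS : ∑ σ : Equiv.Perm (Fin n), f σ = - ∑ σ : Equiv.Perm (Fin n), f σ := by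
    conv_lhs => rw [← Equiv.sum_comp (Equiv.mulRight (Equiv.swap i j)) f]
    simp only [Equiv.coe_mulRight, key, Finset.sum_neg_distrib]
  have h2 : (2 : ℤ) • (∑ σ : Equiv.Perm (Fin n), f σ) = 0 := by
    rw [two_smul]
    nth_rewrite 1 [hS]
    simp
  have := smul_eq_zero.mp h2
  simpa using this
end

section
/- In the universal enveloping algebra U(g) of the loop algebra g = k[t, t^{−1}] ⊗_k sl(2,k), for every n ≥ 1, every γ ∈ ℤ^n and every k ∈ ℤ: ι(e_k) · ∏_{i=1}^n ι(f_{γ_i}) − (∏_{i=1}^n ι(f_{γ_i})) · ι(e_k) = −2 Σ_{1 ≤ i < j ≤ n} (∏_{l ≠ i,j} ι(f_{γ_l})) · ι(f_{γ_i + γ_j + k}) + Σ_{i=1}^n (∏_{l ≠ i} ι(f_{γ_l})) · ι(h_{γ_i + k}), where in each summand the omitted-index products are taken in increasing order of index and the final factor stands at the right. -/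
set_option maxRecDepth 8000

/-!
In the universal enveloping algebra `U(g)` of the loop algebra
`g = k[t,t⁻¹] ⊗ sl(2,k)` (with `x_m = t^m ⊗ x`), for `n ≥ 1`, `γ ∈ ℤ^n`, `m ∈ ℤ`:
`ι(e_m)·∏_i ι(f_{γ_i}) − (∏_i ι(f_{γ_i}))·ι(e_m)
  = −2 Σ_{i<j} (∏_{l≠i,j} ι(f_{γ_l}))·ι(f_{γ_i+γ_j+m}) + Σ_i (∏_{l≠i} ι(f_{γ_l}))·ι(h_{γ_i+m})`,
omitted-index products taken in increasing order of index.
-/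

open scoped TensorProduct

noncomputable section

variable (k : Type) [Field k] [CharZero k]
variable (L : Type) [LieRing L] [LieAlgebra k L]

/-- The loop algebra `k[t,t⁻¹] ⊗ₖ L`. -/
abbrev Loop : Type := LaurentPolynomial k ⊗[k] L

instance : LieAlgebra k (Loop k L) where
  lie_smul c x y := by
    have h2 := lie_smul (algebraMap k (LaurentPolynomial k) c) x y
    rwa [algebraMap_smul, algebraMap_smul] at h2

/-- `x_m = t^m ⊗ x` in the loop algebra. -/
def loopElt (m : ℤ) (x : L) : Loop k L := LaurentPolynomial.T m ⊗ₜ[k] x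

/-- `-2` is central. -/
lemma neg_two_mul_comm {A : Type*} [Ring A] (x y : A) : x * (-2 * y) = -2 * (x * y) := by
  rw [neg_mul, mul_neg, neg_mul, two_mul, mul_add, two_mul]

/-- Moving an `H`-type element through a product of `F`-type elements. -/
lemma auxH {A : Type*} [Ring A] (F : ℤ → A) (H : ℤ → A) (K : ℤ → ℤ → A)
    (hHF : ∀ a b, H a * F b = F b * H a + -2 * K a b)
    (hKF : ∀ a b c, K a b * F c = F c * K a b) (a : ℤ) :
    ∀ (n : ℕ) (γ : Fin n → ℤ),
      H a * (List.ofFn fun i => F (γ i)).prod =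
        (List.ofFn fun i => F (γ i)).prod * H a +
          -2 * ∑ j : Fin n,
            ((List.ofFn fun l => F (γ l)).eraseIdx (j : ℕ)).prod * K a (γ j) := by
  intro n
  induction n with
  | zero => intro γ; simp
  | succ n ih =>
    intro γ
    have hKprod : ∀ b (δ : Fin n → ℤ),
        K a b * (List.ofFn fun i => F (δ i)).prod =
          (List.ofFn fun i => F (δ i)).prod * K a b := by
      intro b δ
      have : Commute (K a b) (List.ofFn fun i => F (δ i)).prod := by
        apply Commute.list_prod_right
        intro y hy
        simp only [List.mem_ofFn] at hy
        obtain ⟨i, rfl⟩ := hy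
        exact hKF a b (δ i)
      exact this.eq
    rw [List.ofFn_succ, List.prod_cons, ← mul_assoc, hHF a (γ 0), add_mul, mul_assoc,
      ih (fun i => γ i.succ)]
    rw [Fin.sum_univ_succ]
    simp only [List.ofFn_succ, Fin.val_zero, List.eraseIdx_cons_zero, Fin.val_succ,
      List.eraseIdx_cons_succ, List.prod_cons]
    rw [mul_add, neg_two_mul_comm, Finset.mul_sum]
    simp only [mul_assoc, hKprod]
    noncomm_ring

/-- The abstract commutator identity. -/
lemma auxMain {A : Type*} [Ring A] (E : A) (F : ℤ → A) (H : ℤ → A) (K : ℤ → ℤ → A)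
    (hEF : ∀ a, E * F a = F a * E + H a)
    (hHF : ∀ a b, H a * F b = F b * H a + -2 * K a b)
    (hKF : ∀ a b c, K a b * F c = F c * K a b) :
    ∀ (n : ℕ) (γ : Fin n → ℤ),
      E * (List.ofFn fun i => F (γ i)).prod - (List.ofFn fun i => F (γ i)).prod * E =
        -2 * (∑ i : Fin n, ∑ j ∈ Finset.Ioi i,
            (((List.ofFn fun l => F (γ l)).eraseIdx (j : ℕ)).eraseIdx (i : ℕ)).prod *
              K (γ i) (γ j)) +
          ∑ i : Fin n, ((List.ofFn fun l => F (γ l)).eraseIdx (i : ℕ)).prod * H (γ i) := by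
  intro n
  induction n with
  | zero => intro γ; simp
  | succ n ih =>
    intro γ
    have ih' := ih (fun i => γ i.succ)
    rw [List.ofFn_succ, List.prod_cons, ← mul_assoc, hEF (γ 0), add_mul,
      auxH F H K hHF hKF (γ 0) n (fun i => γ i.succ),
      mul_assoc, sub_eq_iff_eq_add.mp ih']
    simp only [Fin.sum_univ_succ, Fin.sum_Ioi_zero, Fin.sum_Ioi_succ, List.ofFn_succ,
      Fin.val_zero, Fin.val_succ, List.eraseIdx_cons_zero, List.eraseIdx_cons_succ,
      List.prod_cons]
    rw [mul_add, mul_add, Finset.mul_sum, Finset.mul_sum]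
    simp only [Finset.mul_sum, mul_add, neg_two_mul_comm, mul_assoc]
    noncomm_ring

attribute [local instance 100] LieRing.ofAssociativeRing

theorem stmt14 (e f h : L) (hsl2 : IsSl2Triple h e f)
    (ι : Loop k L →ₗ⁅k⁆ UniversalEnvelopingAlgebra k (Loop k L))
    (hι : ι = UniversalEnvelopingAlgebra.ι k)
    (n : ℕ) (hn : 1 ≤ n) (γ : Fin n → ℤ) (m : ℤ) :
    ι (loopElt k L m e) * (List.ofFn fun i => ι (loopElt k L (γ i) f)).prod -
        (List.ofFn fun i => ι (loopElt k L (γ i) f)).prod * ι (loopElt k L m e) =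
      -2 * (∑ i : Fin n, ∑ j ∈ Finset.Ioi i,
          (((List.ofFn fun l => ι (loopElt k L (γ l) f)).eraseIdx (j : ℕ)).eraseIdx
              (i : ℕ)).prod *
            ι (loopElt k L (γ i + γ j + m) f)) +
        ∑ i : Fin n,
          ((List.ofFn fun l => ι (loopElt k L (γ l) f)).eraseIdx (i : ℕ)).prod *
            ι (loopElt k L (γ i + m) h) := by
  have hb : ∀ (a b : ℤ) (x y : L),
      ⁅loopElt k L a x, loopElt k L b y⁆ = loopElt k L (a + b) ⁅x, y⁆ := by
    intro a b x y
    rw [loopElt, loopElt, loopElt, LieAlgebra.ExtendScalars.bracket_tmul,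
      ← LaurentPolynomial.T_add]
  have key : ∀ x y : Loop k L, ι x * ι y = ι y * ι x + ι ⁅x, y⁆ := by
    intro x y
    have h1 := LieHom.map_lie ι x y
    rw [Ring.lie_def] at h1
    rw [h1]
    abel
  refine auxMain (ι (loopElt k L m e)) (fun a => ι (loopElt k L a f))
    (fun a => ι (loopElt k L (a + m) h)) (fun a b => ι (loopElt k L (a + b + m) f))
    ?_ ?_ ?_ n γ
  · intro a
    rw [key, hb, hsl2.lie_e_f, add_comm m a]
  · intro a b
    rw [key, hb, add_right_comm a m b, hsl2.lie_h_f_nsmul, two_smul]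
    have hl : loopElt k L (a + b + m) (-(f + f)) =
        -(loopElt k L (a + b + m) f + loopElt k L (a + b + m) f) := by
      simp only [loopElt, TensorProduct.tmul_neg, TensorProduct.tmul_add]
    have hneg : ∀ z : Loop k L, ι (-z) = -(ι z) := fun z => map_neg ι.toLinearMap z
    rw [hl, hneg, map_add, neg_mul, two_mul]
  · intro a b c
    rw [key, hb, lie_self]
    have h0 : loopElt k L (a + b + m + c) (0 : L) = 0 := TensorProduct.tmul_zero _ _
    rw [h0, map_zero, add_zero]

end
end

section
/- Let R = k[X_m : m ∈ ℤ] (MvPolynomial ℤ k). For each k ∈ ℤ define k-linear operators on R: F_k is multiplication by X_k; H_k is the k-linear derivation of R with H_k(X_m) = −2 X_{m+k} for all m ∈ ℤ; and E_k is the k-linear map determined on monomials (n ≥ 0, γ ∈ ℤ^n) by E_k(X_{γ_1} ⋯ X_{γ_n}) = −2 Σ_{1 ≤ i < j ≤ n} X_{γ_i + γ_j + k} ∏_{l ≠ i,j} X_{γ_l}. Then for all k, l ∈ ℤ the following commutation relations hold in the endomorphism algebra of R: [E_k, F_l] = H_{k+l}, [H_k, F_l] = −2 F_{k+l}, [H_k,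 E_l] = 2 E_{k+l}, and [E_k, E_l] = [F_k, F_l] = [H_k, H_l] = 0. Consequently the assignment t^m ⊗ e ↦ E_m, t^m ⊗ f ↦ F_m, t^m ⊗ h ↦ H_m defines a representation of the loop algebra k[t,t^{−1}] ⊗_k sl(2,k) on R (this is the canonical quotient N(0) of the imaginary Verma module of highest weight zero, with cyclic generator the constant polynomial 1). -/
/-!
On `R = k[X_m : m ∈ ℤ]`, let `F_a` be multiplication by `X_a`, let `H_a` be the
`k`-linear derivation with `H_a(X_m) = −2X_{m+a}`, and let `E_a` be the `k`-linear map
determined on monomials by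
`E_a(X_{γ_1}⋯X_{γ_n}) = −2 Σ_{i<j} X_{γ_i+γ_j+a} ∏_{l≠i,j} X_{γ_l}`.
Then `[E_a, F_b] = H_{a+b}`, `[H_a, F_b] = −2F_{a+b}`, `[H_a, E_b] = 2E_{a+b}`, and
`[E_a, E_b] = [F_a, F_b] = [H_a, H_b] = 0`: these are the commutation relations of the
loop algebra of `sl(2,k)`, so `t^a ⊗ e ↦ E_a`, `t^a ⊗ f ↦ F_a`, `t^a ⊗ h ↦ H_a` defines a
representation (the canonical quotient `N(0)` of the imaginary Verma module of highest
weight zero).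
-/

open MvPolynomial

section
open Finset
set_option linter.unusedSectionVars false
set_option maxHeartbeats 1000000
namespace Stmt15Aux
variable {k : Type} [Field k] [CharZero k]

lemma erase_zero' (n : ℕ) : (univ : Finset (Fin (n+1))).erase 0 = univ.map (Fin.succEmb n) := by
  rw [Fin.univ_succ, Finset.erase_cons]; rfl

lemma erase_succ' (n : ℕ) (i : Fin n) : (univ : Finset (Fin (n+1))).erase i.succ
    = Finset.cons 0 ((univ.erase i).map (Fin.succEmb n)) (by simp) := by
  ext x
  rcases Fin.eq_zero_or_eq_succ x with rfl | ⟨y, rfl⟩ <;>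
    simp [Fin.succ_ne_zero, (Fin.succ_injective n).eq_iff, Fin.succEmb, (Fin.succ_ne_zero _).symm]

lemma erase_zero_erase (n : ℕ) (j : Fin n) :
    (((univ : Finset (Fin (n+1))).erase 0).erase j.succ) = (univ.erase j).map (Fin.succEmb n) := by
  rw [erase_zero']
  exact (Finset.map_erase _ _ _).symm

lemma erase_succ_erase (n : ℕ) (i j : Fin n) :
    (((univ : Finset (Fin (n+1))).erase i.succ).erase j.succ)
      = Finset.cons 0 (((univ.erase i).erase j).map (Fin.succEmb n)) (by simp) := by
  ext x
  rcases Fin.eq_zero_or_eq_succ x with rfl | ⟨y, rfl⟩ <;>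
    simp [Fin.succ_ne_zero, (Fin.succ_injective n).eq_iff, Fin.succEmb, (Fin.succ_ne_zero _).symm]

lemma prod_map_succ {R : Type*} [CommMonoid R] {n : ℕ} (s : Finset (Fin n)) (f : Fin (n+1) → R) :
    ∏ l ∈ s.map (Fin.succEmb n), f l = ∏ l ∈ s, f l.succ := by
  rw [Finset.prod_map]; rfl

lemma X_mul_prod (n : ℕ) (γ : Fin n → ℤ) (m : ℤ) :
    (X m : MvPolynomial ℤ k) * ∏ i : Fin n, X (γ i) = ∏ i : Fin (n+1), X (Fin.cons m γ i) := by
  rw [Fin.prod_univ_succ]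
  simp

lemma deriv_prod (D : Derivation k (MvPolynomial ℤ k) (MvPolynomial ℤ k)) :
    ∀ (n : ℕ) (γ : Fin n → ℤ), D (∏ i : Fin n, X (γ i))
      = ∑ i : Fin n, D (X (γ i)) * ∏ l ∈ univ.erase i, X (γ l) := by
  intro n
  induction n with
  | zero => intro γ; simp
  | succ n ih =>
      intro γ
      rw [Fin.prod_univ_succ, Derivation.leibniz, ih (fun i => γ i.succ), Fin.sum_univ_succ,
        erase_zero', prod_map_succ]
      simp only [smul_eq_mul, Finset.mul_sum]
      rw [add_comm]
      congr 1
      · ring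
      · apply Finset.sum_congr rfl
        intro i _
        rw [erase_succ', Finset.prod_cons, prod_map_succ]
        ring

lemma key_prod
    (H : ℤ → Derivation k (MvPolynomial ℤ k) (MvPolynomial ℤ k))
    (hH : ∀ (a m : ℤ), H a (X m) = -2 * X (m + a))
    (E : ℤ → (MvPolynomial ℤ k →ₗ[k] MvPolynomial ℤ k))
    (hE : ∀ (a : ℤ) (n : ℕ) (γ : Fin n → ℤ),
      E a (∏ i : Fin n, X (γ i)) =
        -2 * ∑ i : Fin n, ∑ j ∈ Finset.Ioi i,
          X (γ i + γ j + a) * ∏ l ∈ (Finset.univ.erase i).erase j, X (γ l))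
    (a m : ℤ) (n : ℕ) (γ : Fin n → ℤ) :
    E a (X m * ∏ i : Fin n, X (γ i))
      = X m * E a (∏ i : Fin n, X (γ i)) + H (m + a) (∏ i : Fin n, X (γ i)) := by
  rw [X_mul_prod, hE a (n+1) (Fin.cons m γ), hE a n γ,
    deriv_prod (H (m+a)) n γ, Fin.sum_univ_succ, Fin.sum_Ioi_zero]
  simp only [Fin.cons_zero, Fin.cons_succ, Fin.sum_Ioi_succ, erase_zero_erase, erase_succ_erase,
    prod_map_succ, Finset.prod_cons, hH]
  have hidx : ∀ j : Fin n, γ j + (m + a) = m + γ j + a := by intro j; ring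
  simp only [hidx, Finset.mul_sum]
  rw [mul_add, add_comm]
  congr 1
  · rw [Finset.mul_sum]
    refine Finset.sum_congr rfl fun i _ => ?_
    rw [Finset.mul_sum]
    refine Finset.sum_congr rfl fun j _ => ?_
    ring
  · rw [Finset.mul_sum]
    refine Finset.sum_congr rfl fun i _ => ?_
    ring

lemma monomial_one_eq (s : ℤ →₀ ℕ) : (monomial s (1:k)) = (s.toMultiset.map X).prod := by
  induction s using Finsupp.induction with
  | zero => simp
  | single_add a b f ha hb ih =>
      rw [Finsupp.toMultiset_add, Multiset.map_add, Multiset.prod_add, ← ih,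
        Finsupp.toMultiset_single, Multiset.map_nsmul, Multiset.map_singleton,
        Multiset.nsmul_singleton, Multiset.prod_replicate, X_pow_eq_monomial,
        monomial_mul, one_mul]

lemma exists_prod (m : Multiset ℤ) :
    ∃ (n : ℕ) (γ : Fin n → ℤ), (m.map (X (R:=k))).prod = ∏ i : Fin n, X (γ i) := by
  refine ⟨m.toList.length, m.toList.get, ?_⟩
  conv_lhs => rw [← Multiset.coe_toList m]
  rw [Multiset.map_coe, Multiset.prod_coe, ← Fin.prod_ofFn]
  congr 1
  have : (fun i => (X (m.toList.get i) : MvPolynomial ℤ k)) = X ∘ m.toList.get := rfl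
  rw [this, ← List.map_ofFn, List.ofFn_get]

lemma ext_prod (φ ψ : MvPolynomial ℤ k →ₗ[k] MvPolynomial ℤ k)
    (h : ∀ (n : ℕ) (γ : Fin n → ℤ), φ (∏ i : Fin n, X (γ i)) = ψ (∏ i : Fin n, X (γ i))) :
    φ = ψ := by
  apply LinearMap.ext; intro p
  induction p using MvPolynomial.induction_on' with
  | add p q hp hq => rw [map_add, map_add, hp, hq]
  | monomial s c =>
      obtain ⟨n, γ, hg⟩ := exists_prod (k := k) s.toMultiset
      have hs : (monomial s c : MvPolynomial ℤ k) = c • ∏ i : Fin n, X (γ i) := by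
        rw [← hg, ← monomial_one_eq, smul_monomial, smul_eq_mul, mul_one]
      rw [hs, map_smul, map_smul, h]
variable (H : ℤ → Derivation k (MvPolynomial ℤ k) (MvPolynomial ℤ k))
  (hH : ∀ (a m : ℤ), H a (X m) = -2 * X (m + a))
  (E : ℤ → (MvPolynomial ℤ k →ₗ[k] MvPolynomial ℤ k))
  (hE : ∀ (a : ℤ) (n : ℕ) (γ : Fin n → ℤ),
      E a (∏ i : Fin n, X (γ i)) =
        -2 * ∑ i : Fin n, ∑ j ∈ Finset.Ioi i,
          X (γ i + γ j + a) * ∏ l ∈ (Finset.univ.erase i).erase j, X (γ l))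

lemma hCneg : (-2 : MvPolynomial ℤ k) = C (-2 : k) := by
  rw [map_neg, map_ofNat]

include hH in
lemma HHpt (a b : ℤ) (p : MvPolynomial ℤ k) : H a (H b p) = H b (H a p) := by
  have hsm : ∀ (c : ℤ) (x : MvPolynomial ℤ k), H c (-2 * x) = -2 * H c x := by
    intro c x
    rw [hCneg, ← smul_eq_C_mul, Derivation.map_smul, smul_eq_C_mul, ← hCneg]
  have h0 : ⁅H a, H b⁆ = 0 := by
    apply MvPolynomial.derivation_ext
    intro i
    rw [Derivation.commutator_apply, hH, hH, hsm, hsm, hH, hH, Derivation.zero_apply]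
    ring_nf
  have := DFunLike.congr_fun h0 p
  rw [Derivation.commutator_apply, Derivation.zero_apply, sub_eq_zero] at this
  exact this

include hH hE in
lemma key (a m : ℤ) (p : MvPolynomial ℤ k) :
    E a (X m * p) = X m * E a p + H (m + a) p := by
  have h := ext_prod (E a ∘ₗ LinearMap.mulLeft k (X m))
    ((LinearMap.mulLeft k (X m)) ∘ₗ E a + (H (m + a)).toLinearMap)
    (fun n γ => by simpa using key_prod H hH E hE a m n γ)
  simpa using LinearMap.congr_fun h p

include hE in
lemma hE1 (c : ℤ) : E c (1 : MvPolynomial ℤ k) = 0 := by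
  have := hE c 0 (fun _ => 0)
  simpa using this

include hH hE in
lemma HEprod (a b : ℤ) : ∀ (n : ℕ) (γ : Fin n → ℤ),
    H a (E b (∏ i : Fin n, X (γ i))) - E b (H a (∏ i : Fin n, X (γ i)))
      = C (2:k) * E (a + b) (∏ i : Fin n, X (γ i)) := by
  intro n
  induction n with
  | zero =>
      intro γ
      have e1 : (∏ i : Fin 0, X (γ i) : MvPolynomial ℤ k) = 1 := by simp
      rw [e1, hE1 E hE, hE1 E hE, Derivation.map_one_eq_zero, map_zero, map_zero]
      ring
  | succ n ih =>
      intro γ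
      rw [Fin.prod_univ_succ]
      set m := γ 0 with hm
      set q : MvPolynomial ℤ k := ∏ i : Fin n, X (γ i.succ) with hq
      have ihq := ih (fun i => γ i.succ)
      rw [← hq] at ihq
      have f1 : E b (X m * q) = X m * E b q + H (m + b) q := key H hH E hE b m q
      have f2 : H a (X m * E b q) = C (-2:k) * (X (m+a) * E b q) + X m * H a (E b q) := by
        rw [Derivation.leibniz, hH, smul_eq_mul, smul_eq_mul, hCneg]; ring
      have f3 : H a (X m * q) = C (-2:k) * (X (m+a) * q) + X m * H a q := by
        rw [Derivation.leibniz, hH, smul_eq_mul, smul_eq_mul, hCneg]; ring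
      have f4 : E b (C (-2:k) * (X (m+a) * q))
          = C (-2:k) * (X (m+a) * E b q + H (m+a+b) q) := by
        rw [← smul_eq_C_mul, map_smul, key H hH E hE b (m+a) q, smul_eq_C_mul]
      have f5 : E b (X m * H a q) = X m * E b (H a q) + H (m + b) (H a q) :=
        key H hH E hE b m (H a q)
      have f6 : H a (H (m+b) q) = H (m+b) (H a q) := HHpt H hH a (m+b) q
      calc H a (E b (X m * q)) - E b (H a (X m * q))
          = (C (-2:k) * (X (m+a) * E b q) + X m * H a (E b q) + H (m+b) (H a q))
            - (C (-2:k) * (X (m+a) * E b q + H (m+a+b) q)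
                + (X m * E b (H a q) + H (m + b) (H a q))) := by
            rw [f1, map_add, f2, f6, f3, map_add, f4, f5]
        _ = X m * (H a (E b q) - E b (H a q)) - C (-2:k) * H (m+a+b) q := by ring
        _ = X m * (C (2:k) * E (a+b) q) + C (2:k) * H (m+a+b) q := by
            rw [ihq, map_neg]
            ring
        _ = C (2:k) * E (a + b) (X m * q) := by
            rw [key H hH E hE (a+b) m q, ← add_assoc]
            ring

include hH hE in
lemma HEpt (a b : ℤ) (p : MvPolynomial ℤ k) :
    H a (E b p) - E b (H a p) = C (2:k) * E (a + b) p := by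
  have h := ext_prod ((H a).toLinearMap ∘ₗ E b - E b ∘ₗ (H a).toLinearMap)
    ((2:k) • E (a + b)) (fun n γ => by
      simpa [smul_eq_C_mul] using HEprod H hH E hE a b n γ)
  have := LinearMap.congr_fun h p
  simpa [smul_eq_C_mul] using this

include hH hE in
lemma EEprod (a b : ℤ) : ∀ (n : ℕ) (γ : Fin n → ℤ),
    E a (E b (∏ i : Fin n, X (γ i))) = E b (E a (∏ i : Fin n, X (γ i))) := by
  intro n
  induction n with
  | zero =>
      intro γ
      have e1 : (∏ i : Fin 0, X (γ i) : MvPolynomial ℤ k) = 1 := by simp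
      rw [e1, hE1 E hE, hE1 E hE, map_zero, map_zero]
  | succ n ih =>
      intro γ
      rw [Fin.prod_univ_succ]
      set m := γ 0 with hm
      set q : MvPolynomial ℤ k := ∏ i : Fin n, X (γ i.succ) with hq
      have ihq := ih (fun i => γ i.succ)
      rw [← hq] at ihq
      have expand : ∀ c d : ℤ, E c (E d (X m * q))
          = X m * E c (E d q) + H (m+c) (E d q) + H (m+d) (E c q)
            - C (2:k) * E (m+d+c) q := by
        intro c d
        rw [key H hH E hE d m q, map_add, key H hH E hE c m (E d q)]
        have h2 : E c (H (m+d) q) = H (m+d) (E c q) - C (2:k) * E (m+d+c) q := by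
          have := HEpt H hH E hE (m+d) c q
          linear_combination -this
        rw [h2]
        ring
      rw [expand a b, expand b a, ihq, show m+b+a = m+a+b by ring]
      ring

end Stmt15Aux
end

noncomputable section

variable (k : Type) [Field k] [CharZero k]

/-- `F_a`: multiplication by `X_a`. -/
def Fop (a : ℤ) : MvPolynomial ℤ k →ₗ[k] MvPolynomial ℤ k :=
  LinearMap.mulLeft k (X a)

theorem stmt15
    (H : ℤ → Derivation k (MvPolynomial ℤ k) (MvPolynomial ℤ k))
    (hH : ∀ (a m : ℤ), H a (X m) = -2 * X (m + a))
    (E : ℤ → (MvPolynomial ℤ k →ₗ[k] MvPolynomial ℤ k))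
    (hE : ∀ (a : ℤ) (n : ℕ) (γ : Fin n → ℤ),
      E a (∏ i : Fin n, X (γ i)) =
        -2 * ∑ i : Fin n, ∑ j ∈ Finset.Ioi i,
          X (γ i + γ j + a) * ∏ l ∈ (Finset.univ.erase i).erase j, X (γ l)) :
    ∀ a b : ℤ,
      (E a ∘ₗ Fop k b - Fop k b ∘ₗ E a = (H (a + b)).toLinearMap) ∧
      ((H a).toLinearMap ∘ₗ Fop k b - Fop k b ∘ₗ (H a).toLinearMap
          = (-2 : k) • Fop k (a + b)) ∧
      ((H a).toLinearMap ∘ₗ E b - E b ∘ₗ (H a).toLinearMap = (2 : k) • E (a + b)) ∧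
      (E a ∘ₗ E b - E b ∘ₗ E a = 0) ∧
      (Fop k a ∘ₗ Fop k b - Fop k b ∘ₗ Fop k a = 0) ∧
      ((H a).toLinearMap ∘ₗ (H b).toLinearMap - (H b).toLinearMap ∘ₗ (H a).toLinearMap
          = 0) := by
  intro a b
  refine ⟨?_, ?_, ?_, ?_, ?_, ?_⟩
  · apply LinearMap.ext; intro p
    simp only [LinearMap.sub_apply, LinearMap.comp_apply, Fop, LinearMap.mulLeft_apply,
      Derivation.coeFn_coe]
    rw [Stmt15Aux.key H hH E hE a b p, show b + a = a + b from add_comm b a]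
    ring
  · apply LinearMap.ext; intro p
    simp only [LinearMap.sub_apply, LinearMap.comp_apply, Fop, LinearMap.mulLeft_apply,
      Derivation.coeFn_coe, LinearMap.smul_apply]
    rw [Derivation.leibniz, hH, smul_eq_mul, smul_eq_mul, smul_eq_C_mul, ← Stmt15Aux.hCneg,
      show b + a = a + b from add_comm b a]
    ring
  · apply LinearMap.ext; intro p
    simp only [LinearMap.sub_apply, LinearMap.comp_apply, Derivation.coeFn_coe,
      LinearMap.smul_apply]
    rw [smul_eq_C_mul]
    exact Stmt15Aux.HEpt H hH E hE a b p
  · apply LinearMap.ext; intro p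
    simp only [LinearMap.sub_apply, LinearMap.comp_apply, LinearMap.zero_apply]
    rw [sub_eq_zero]
    have h := Stmt15Aux.ext_prod (E a ∘ₗ E b) (E b ∘ₗ E a)
      (fun n γ => by simpa using Stmt15Aux.EEprod H hH E hE a b n γ)
    exact LinearMap.congr_fun h p
  · apply LinearMap.ext; intro p
    simp only [LinearMap.sub_apply, LinearMap.comp_apply, Fop, LinearMap.mulLeft_apply,
      LinearMap.zero_apply]
    ring
  · apply LinearMap.ext; intro p
    simp only [LinearMap.sub_apply, LinearMap.comp_apply, Derivation.coeFn_coe,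
      LinearMap.zero_apply]
    rw [sub_eq_zero]
    exact Stmt15Aux.HHpt H hH a b p


end
end
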